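/- Let D ≥ 3 be an integer and set T(w) = (1 − √(1 − 4w))/(2w) for 0 < w ≤ 1/4. Then the limit as z tends to (4D)^{-1} from below of (1 − 4Dz) · T(Dz)^5 · (D(D−1)·z²·T(Dz)²/((1 − D·z·T(Dz)²)(1 − z·T(Dz)²)))² exists and equals 1/2. -/

import Mathlib

open Filter

/-- Closed form of the plane-tree generating function. -/
noncomputable def Tgf (w : ℝ) : ℝ := (1 - Real.sqrt (1 - 4 * w)) / (2 * w)

/-!
Writing `w = Dz`, `T = T(w)` and `s = √(1 - 4w)`, the quadratic equation `wT² = T - 1` gives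
`1 - DzT² = sT` and `1 - zT² = (D + 1 - T)/D`, while `1 - 4Dz = s²`. The factor `s²` in front
therefore cancels the pole `1/s²` of the squared fraction exactly, and the expression equals
`(D - 1)² w⁴ T⁷ / (D + 1 - T)²`, which is continuous at `w = 1/4`, where `T = 2`; its value there
is `(D - 1)² · 2⁻⁸ · 2⁷ / (D - 1)² = 1/2`.
-/

section Tgf

variable {w : ℝ}

theorem Tgf_eq_two_div (hw0 : w ≠ 0) (hw : w ≤ 1 / 4) :
    Tgf w = 2 / (1 + Real.sqrt (1 - 4 * w)) := by
  have hs : Real.sqrt (1 - 4 * w) ^ 2 = 1 - 4 * w := Real.sq_sqrt (by linarith)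
  have hpos : 0 < 1 + Real.sqrt (1 - 4 * w) := by positivity
  rw [Tgf, div_eq_div_iff (mul_ne_zero two_ne_zero hw0) hpos.ne']
  linear_combination -hs

theorem mul_Tgf_sq (hw0 : w ≠ 0) (hw : w ≤ 1 / 4) : w * Tgf w ^ 2 = Tgf w - 1 := by
  have hs : Real.sqrt (1 - 4 * w) ^ 2 = 1 - 4 * w := Real.sq_sqrt (by linarith)
  have hpos : 0 < 1 + Real.sqrt (1 - 4 * w) := by positivity
  rw [Tgf_eq_two_div hw0 hw, div_pow, mul_div_assoc', div_sub_one (by positivity),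
    div_eq_div_iff (by positivity) hpos.ne']
  linear_combination (1 + Real.sqrt (1 - 4 * w)) * hs

theorem one_sub_mul_Tgf_sq (hw0 : w ≠ 0) (hw : w ≤ 1 / 4) :
    1 - w * Tgf w ^ 2 = Real.sqrt (1 - 4 * w) * Tgf w := by
  have hpos : 0 < 1 + Real.sqrt (1 - 4 * w) := by positivity
  rw [mul_Tgf_sq hw0 hw, Tgf_eq_two_div hw0 hw]
  field_simp
  ring

theorem Tgf_one_div_four : Tgf (1 / 4) = 2 := by
  norm_num [Tgf]

theorem continuousAt_Tgf (hw0 : w ≠ 0) : ContinuousAt Tgf w := by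
  unfold Tgf
  exact (continuousAt_const.sub (Real.continuous_sqrt.continuousAt.comp (by fun_prop))).div
    (by fun_prop) (mul_ne_zero two_ne_zero hw0)

end Tgf

/-- The tadpole amplitude after the pole of `1/(1 - DzT²)²` has been cancelled. -/
noncomputable def tadpoleRegular (D w : ℝ) : ℝ :=
  (D - 1) ^ 2 * w ^ 4 * Tgf w ^ 7 / (D + 1 - Tgf w) ^ 2

theorem tadpole_eq_tadpoleRegular {D z : ℝ} (hz0 : D * z ≠ 0)
    (hz : D * z < 1 / 4) :
    (1 - 4 * D * z) * Tgf (D * z) ^ 5 *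
        (D * (D - 1) * z ^ 2 * Tgf (D * z) ^ 2 /
          ((1 - D * z * Tgf (D * z) ^ 2) * (1 - z * Tgf (D * z) ^ 2))) ^ 2 =
      tadpoleRegular D (D * z) := by
  rw [tadpoleRegular]
  set w := D * z with hw
  have hw' : w ≤ 1 / 4 := hz.le
  set s := Real.sqrt (1 - 4 * w)
  set t := Tgf w
  have hs0 : 0 < s := Real.sqrt_pos.mpr (by linarith)
  have hs2 : s ^ 2 = 1 - 4 * w := Real.sq_sqrt (by linarith)
  have hquad : w * t ^ 2 = t - 1 := mul_Tgf_sq hz0 hw'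
  have e0 : 1 - 4 * D * z = s ^ 2 := by rw [hs2, hw]; ring
  have e1 : 1 - D * z * t ^ 2 = s * t := one_sub_mul_Tgf_sq hz0 hw'
  have e2 : 1 - z * t ^ 2 = (D + 1 - t) / D := by
    rw [eq_div_iff (left_ne_zero_of_mul hz0)]
    linear_combination -hquad + t ^ 2 * hw
  rw [e0, e1, e2]
  field_simp
  ring

theorem continuousAt_tadpoleRegular {D : ℝ} (hD : 1 < D) :
    ContinuousAt (tadpoleRegular D) (1 / 4) := by
  have hT := continuousAt_Tgf (w := 1 / 4) (by norm_num)
  refine ((continuousAt_const.mul (continuousAt_id.pow 4)).mul (hT.pow 7)).div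
    ((continuousAt_const.sub hT).pow 2) ?_
  rw [Tgf_one_div_four]
  exact pow_ne_zero 2 (by linarith)

theorem tadpoleRegular_one_div_four {D : ℝ} (hD : 1 < D) : tadpoleRegular D (1 / 4) = 1 / 2 := by
  have hD1 : D - 1 ≠ 0 := by linarith
  rw [tadpoleRegular, Tgf_one_div_four, show D + 1 - 2 = D - 1 by ring]
  field_simp
  norm_num

/-- The one-loop reduced graph with multicolored self-loop and multicolored bridge:
as `z → (4D)⁻¹` from below,
`(1-4Dz)·T(Dz)⁵·(D(D-1)z²T²/((1-DzT²)(1-zT²)))² → 1/2`. -/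
theorem one_loop_multicolored_tadpole_critical (D : ℕ) (hD : 3 ≤ D) :
    Tendsto
      (fun z : ℝ =>
        (1 - 4 * (D : ℝ) * z) * (Tgf ((D : ℝ) * z)) ^ 5 *
          ((D : ℝ) * ((D : ℝ) - 1) * z ^ 2 * (Tgf ((D : ℝ) * z)) ^ 2 /
            ((1 - (D : ℝ) * z * (Tgf ((D : ℝ) * z)) ^ 2) *
              (1 - z * (Tgf ((D : ℝ) * z)) ^ 2))) ^ 2)
      (nhdsWithin (1 / (4 * (D : ℝ))) (Set.Iio (1 / (4 * (D : ℝ)))))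
      (nhds (1 / 2)) := by
  have hD1 : (1 : ℝ) < D := by exact_mod_cast (by omega : 1 < D)
  set c : ℝ := 1 / (4 * (D : ℝ))
  have hDc : (D : ℝ) * c = 1 / 4 := by simp only [c]; field_simp
  have hlim : Tendsto (fun z : ℝ => tadpoleRegular D (D * z)) (nhdsWithin c (Set.Iio c))
      (nhds (1 / 2)) := by
    have hcont : ContinuousAt (fun z : ℝ => tadpoleRegular D (D * z)) c :=
      (hDc ▸ continuousAt_tadpoleRegular hD1).comp (continuousAt_const.mul continuousAt_id)
    simpa only [hDc, tadpoleRegular_one_div_four hD1] using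
      hcont.continuousWithinAt.tendsto (s := Set.Iio c)
  refine hlim.congr' ?_
  filter_upwards [self_mem_nhdsWithin,
    eventually_nhdsWithin_of_eventually_nhds (eventually_gt_nhds (by positivity : 0 < c))]
    with z (hzc : z < c) hz_pos
  have hw : (D : ℝ) * z < 1 / 4 := hDc ▸ mul_lt_mul_of_pos_left hzc (by linarith)
  exact (tadpole_eq_tadpoleRegular (by positivity) hw).symm
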